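/- For every p∈I_{1,3}, the operator identity d_{μ_p} = ad x^{−σ_p} + ∂_{t_p} − ∂_{t_{p̄}} holds on 𝒦, where μ_p:Γ→F is the homomorphism μ_p(α)=α_{p̄}−α_p and d_{μ_p}(x^{α,i⃗})=μ_p(α)x^{α,i⃗}. -/

import Mathlib

noncomputable section

/-- `ι_i = ℓ₁ + ⋯ + ℓ_i`. -/
def iot (ℓ : ℕ → ℕ) (i : ℕ) : ℕ := ∑ k ∈ Finset.Icc 1 i, ℓ k

/-- `I_{i,j} = {ι_{i-1}+1, …, ι_j}`. -/
def iSet (ℓ : ℕ → ℕ) (i j : ℕ) : Finset ℕ := Finset.Icc (iot ℓ (i - 1) + 1) (iot ℓ j)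

/-- The index-shift map `p ↦ p̄` (shift by `ι₆`). -/
def bar (ℓ : ℕ → ℕ) (p : ℕ) : ℕ := if p ≤ iot ℓ 6 then p + iot ℓ 6 else p - iot ℓ 6

/-- `K̄ = {p̄ : p ∈ K}`. -/
def barSet (ℓ : ℕ → ℕ) (K : Finset ℕ) : Finset ℕ := K.image (bar ℓ)

/-- `J_{i,j} = I_{i,j} ∪ Ī_{i,j}`. -/
def jSet (ℓ : ℕ → ℕ) (i j : ℕ) : Finset ℕ := iSet ℓ i j ∪ barSet ℓ (iSet ℓ i j)

/-- The semigroup `𝒥 = 𝒥₀ × 𝒥₁`, encoded as functions `ℕ → ℕ`; `j0 = true`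
means `𝒥₀ = ℕ` and `j0 = false` means `𝒥₀ = {0}`. -/
def jIdx (ℓ : ℕ → ℕ) (j0 : Bool) : Set (ℕ → ℕ) :=
  {i | (j0 = false → i 0 = 0) ∧
    ∀ p, 1 ≤ p →
      (p ∈ iSet ℓ 1 2 ∪ iSet ℓ 4 4 ∪ barSet ℓ (iSet ℓ 1 1) ∨ 2 * iot ℓ 6 < p) → i p = 0}

/-- `σ_p` (with `σ_p = σ_{p̄}`). -/
def sgm (F : Type*) [Field F] (ℓ : ℕ → ℕ) (p : ℕ) : ℕ → F :=
  let q := if p ≤ iot ℓ 6 then p else p - iot ℓ 6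
  if q ∈ iSet ℓ 1 3 then -Pi.single q (1 : F) - Pi.single (q + iot ℓ 6) (1 : F)
  else if q ∈ iSet ℓ 4 5 then -Pi.single q (1 : F)
  else 0

/-- The underlying space `𝒜`: the free `F`-module with basis `Γ × 𝒥`. -/
abbrev CA (F : Type*) [Field F] (ℓ : ℕ → ℕ) (Γ : AddSubgroup (ℕ → F)) (j0 : Bool) : Type _ :=
  (↥Γ × ↥(jIdx ℓ j0)) →₀ F

/-- The basis monomial `x^{α,i⃗}`, with the convention that it is `0` if `(α,i⃗) ∉ Γ × 𝒥`. -/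
def X (F : Type*) [Field F] (ℓ : ℕ → ℕ) (Γ : AddSubgroup (ℕ → F)) (j0 : Bool)
    (α : ℕ → F) (i : ℕ → ℕ) : CA F ℓ Γ j0 :=
  @dite _ (α ∈ Γ ∧ i ∈ jIdx ℓ j0) (Classical.dec _)
    (fun h => Finsupp.single (⟨α, h.1⟩, ⟨i, h.2⟩) 1) (fun _ => 0)

variable (F : Type*) [Field F] (ℓ : ℕ → ℕ) (Γ : AddSubgroup (ℕ → F)) (j0 : Bool)

/-- The commutative associative product on `𝒜`. -/
def mulA (u v : CA F ℓ Γ j0) : CA F ℓ Γ j0 :=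
  u.sum fun a ca => v.sum fun b cb =>
    (ca * cb) • X F ℓ Γ j0 (a.1.1 + b.1.1) (a.2.1 + b.2.1)

/-- The grading operator `∂*_p`. -/
def pstar (p : ℕ) (u : CA F ℓ Γ j0) : CA F ℓ Γ j0 :=
  u.sum fun a ca => (ca * a.1.1 p) • Finsupp.single a 1

/-- The down-grading operator `∂_{t_p}`. -/
def pt (p : ℕ) (u : CA F ℓ Γ j0) : CA F ℓ Γ j0 :=
  u.sum fun a ca => (ca * (a.2.1 p : F)) • X F ℓ Γ j0 a.1.1 (a.2.1 - Pi.single p 1)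

/-- `∂_p = ∂*_p + ∂_{t_p}`. -/
def dd (p : ℕ) (u : CA F ℓ Γ j0) : CA F ℓ Γ j0 := pstar F ℓ Γ j0 p u + pt F ℓ Γ j0 p u

/-- `∂ = Σ_{p∈J_{1,3}∪I_{4,5}} ∂*_p + Σ_{p∈I₆∪Ī_{4,6}} t_p ∂_{t_p}`. -/
def Dop (u : CA F ℓ Γ j0) : CA F ℓ Γ j0 :=
  (∑ p ∈ jSet ℓ 1 3 ∪ iSet ℓ 4 5, pstar F ℓ Γ j0 p u) +
    ∑ p ∈ iSet ℓ 6 6 ∪ barSet ℓ (iSet ℓ 4 6),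
      mulA F ℓ Γ j0 (X F ℓ Γ j0 0 (Pi.single p 1)) (pt F ℓ Γ j0 p u)

/-- The contact bracket (2.18):
`[u,v] = Σ_{p∈I} x^{σ_p}(∂_p u·∂_{p̄} v − ∂_{p̄} u·∂_p v) + (2−∂)(u)·∂₀(v) − ∂₀(u)·(2−∂)(v)`. -/
def brk (u v : CA F ℓ Γ j0) : CA F ℓ Γ j0 :=
  (∑ p ∈ iSet ℓ 1 6,
      mulA F ℓ Γ j0 (X F ℓ Γ j0 (sgm F ℓ p) 0)
        (mulA F ℓ Γ j0 (dd F ℓ Γ j0 p u) (dd F ℓ Γ j0 (bar ℓ p) v) -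
          mulA F ℓ Γ j0 (dd F ℓ Γ j0 (bar ℓ p) u) (dd F ℓ Γ j0 p v))) +
    mulA F ℓ Γ j0 ((2 : F) • u - Dop F ℓ Γ j0 u) (dd F ℓ Γ j0 0 v) -
    mulA F ℓ Γ j0 (dd F ℓ Γ j0 0 u) ((2 : F) • v - Dop F ℓ Γ j0 v)


/-- For a function `μ : Γ → F`, the diagonal linear map `d_μ : x^{α,i⃗} ↦ μ(α)x^{α,i⃗}`. -/
def dmu (μ : ↥Γ → F) (u : CA F ℓ Γ j0) : CA F ℓ Γ j0 :=
  u.sum fun a ca => (ca * μ a.1) • Finsupp.single a 1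

/-! The weight `-σ_p = 1_[p] + 1_[p̄]` has no `0`-component and total degree `2`, so `x^{-σ_p}`
is an eigenvector of every `∂_q` with `∂₀ x^{-σ_p} = 0` and `(2 - ∂) x^{-σ_p} = 0`. Hence the
contact part of `[x^{-σ_p}, u]` vanishes, and of the symplectic sum only the summand `q = p`
survives: it is `x^{σ_p} x^{-σ_p} (∂_{p̄} u - ∂_p u) = ∂_{p̄} u - ∂_p u`. Removing the
`∂_t`-parts leaves `∂*_{p̄} - ∂*_p = d_{μ_p}`. -/

section

variable {F ℓ Γ j0} {p q : ℕ}

lemma iot_mono : Monotone (iot ℓ) :=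
  fun _ _ h => Finset.sum_le_sum_of_subset (Finset.Icc_subset_Icc_right h)

lemma one_le_of_mem_iSet {i j : ℕ} (hp : p ∈ iSet ℓ i j) : 1 ≤ p :=
  le_trans (Nat.le_add_left 1 _) (Finset.mem_Icc.1 hp).1

lemma le_iot_six_of_mem_iSet {i j : ℕ} (hp : p ∈ iSet ℓ i j) (hj : j ≤ 6) : p ≤ iot ℓ 6 :=
  (Finset.mem_Icc.1 hp).2.trans (iot_mono hj)

lemma bar_of_le (hp : p ≤ iot ℓ 6) : bar ℓ p = p + iot ℓ 6 :=
  if_pos hp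

lemma mem_iSet_one_six_of_mem_iSet_one_three (hp : p ∈ iSet ℓ 1 3) : p ∈ iSet ℓ 1 6 :=
  Finset.Icc_subset_Icc_right (iot_mono (by norm_num)) hp

lemma mem_jSet_of_mem_iSet_one_three (hp : p ∈ iSet ℓ 1 3) :
    p ∈ jSet ℓ 1 3 ∪ iSet ℓ 4 5 ∧ bar ℓ p ∈ jSet ℓ 1 3 ∪ iSet ℓ 4 5 :=
  ⟨Finset.mem_union_left _ (Finset.mem_union_left _ hp),
    Finset.mem_union_left _ (Finset.mem_union_right _ (Finset.mem_image_of_mem _ hp))⟩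

lemma sgm_of_mem_iSet_one_three (hp : p ∈ iSet ℓ 1 3) :
    sgm F ℓ p = -(Pi.single p 1 + Pi.single (bar ℓ p) 1) := by
  have hp6 := le_iot_six_of_mem_iSet hp (by norm_num)
  simp only [sgm]
  rw [if_pos hp6, if_pos hp, bar_of_le hp6, neg_add, sub_eq_add_neg]

lemma neg_sgm_mem (hΓ : ∀ p ∈ jSet ℓ 1 3 ∪ iSet ℓ 4 5, (Pi.single p (1 : F) : ℕ → F) ∈ Γ)
    (hp : p ∈ iSet ℓ 1 3) : -sgm F ℓ p ∈ Γ := by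
  rw [sgm_of_mem_iSet_one_three hp, neg_neg]
  exact Γ.add_mem (hΓ _ (mem_jSet_of_mem_iSet_one_three hp).1)
    (hΓ _ (mem_jSet_of_mem_iSet_one_three hp).2)

lemma neg_sgm_apply_zero (hp : p ∈ iSet ℓ 1 3) : (-sgm F ℓ p) 0 = 0 := by
  have hp1 := one_le_of_mem_iSet hp
  rw [sgm_of_mem_iSet_one_three hp, neg_neg, Pi.add_apply,
    Pi.single_eq_of_ne (by omega), Pi.single_eq_of_ne (by unfold bar; split_ifs <;> omega),
    add_zero]

lemma sum_neg_sgm (hp : p ∈ iSet ℓ 1 3) :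
    ∑ q ∈ jSet ℓ 1 3 ∪ iSet ℓ 4 5, (-sgm F ℓ p) q = 2 := by
  obtain ⟨hpJ, hpbJ⟩ := mem_jSet_of_mem_iSet_one_three hp
  simp only [sgm_of_mem_iSet_one_three hp, neg_neg, Pi.add_apply, Finset.sum_add_distrib,
    Pi.single_apply, Finset.sum_ite_eq', if_pos hpJ, if_pos hpbJ]
  norm_num

lemma neg_sgm_apply_of_mem (hp : p ∈ iSet ℓ 1 3) (hq : q ∈ iSet ℓ 1 6) :
    (-sgm F ℓ p) q = if q = p then 1 else 0 := by
  have hq6 := le_iot_six_of_mem_iSet hq le_rfl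
  have hp1 := one_le_of_mem_iSet hp
  rw [sgm_of_mem_iSet_one_three hp, neg_neg, Pi.add_apply, Pi.single_apply,
    Pi.single_eq_of_ne (by rw [bar_of_le (le_iot_six_of_mem_iSet hp (by norm_num))]; omega),
    add_zero]

lemma neg_sgm_apply_bar_of_mem (hp : p ∈ iSet ℓ 1 3) (hq : q ∈ iSet ℓ 1 6) :
    (-sgm F ℓ p) (bar ℓ q) = if q = p then 1 else 0 := by
  have hp6 := le_iot_six_of_mem_iSet hp (by norm_num)
  have hq1 := one_le_of_mem_iSet hq
  rw [sgm_of_mem_iSet_one_three hp, neg_neg, Pi.add_apply,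
    bar_of_le (le_iot_six_of_mem_iSet hq le_rfl), bar_of_le hp6,
    Pi.single_eq_of_ne (by omega), zero_add, Pi.single_apply]
  exact if_congr (by omega) rfl rfl

lemma zero_mem_jIdx : (0 : ℕ → ℕ) ∈ jIdx ℓ j0 :=
  ⟨fun _ => rfl, fun _ _ _ => rfl⟩

lemma X_of_mem {α : ℕ → F} {i : ℕ → ℕ} (hα : α ∈ Γ) (hi : i ∈ jIdx ℓ j0) :
    X F ℓ Γ j0 α i = Finsupp.single (⟨α, hα⟩, ⟨i, hi⟩) 1 :=
  dif_pos ⟨hα, hi⟩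

lemma single_eq_smul_X (a : ↥Γ × ↥(jIdx ℓ j0)) (c : F) :
    Finsupp.single a c = c • X F ℓ Γ j0 a.1.1 a.2.1 := by
  rw [X_of_mem a.1.2 a.2.2, Finsupp.smul_single_one]

lemma mulA_zero_left (v : CA F ℓ Γ j0) : mulA F ℓ Γ j0 0 v = 0 :=
  Finsupp.sum_zero_index

lemma mulA_smul_left (c : F) (u v : CA F ℓ Γ j0) :
    mulA F ℓ Γ j0 (c • u) v = c • mulA F ℓ Γ j0 u v := by
  unfold mulA
  rw [Finsupp.sum_smul_index' (fun a => by simp), Finsupp.smul_sum]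
  refine Finsupp.sum_congr fun a _ => ?_
  rw [Finsupp.smul_sum]
  exact Finsupp.sum_congr fun b _ => by rw [smul_smul, smul_eq_mul, mul_assoc]

lemma mulA_add_right (u v w : CA F ℓ Γ j0) :
    mulA F ℓ Γ j0 u (v + w) = mulA F ℓ Γ j0 u v + mulA F ℓ Γ j0 u w := by
  unfold mulA
  rw [← Finsupp.sum_add]
  refine Finsupp.sum_congr fun a _ => ?_
  exact Finsupp.sum_add_index' (fun b => by simp) (fun b c₁ c₂ => by rw [mul_add, add_smul])

lemma mulA_smul_right (c : F) (u v : CA F ℓ Γ j0) :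
    mulA F ℓ Γ j0 u (c • v) = c • mulA F ℓ Γ j0 u v := by
  unfold mulA
  rw [Finsupp.smul_sum]
  refine Finsupp.sum_congr fun a _ => ?_
  rw [Finsupp.sum_smul_index' (fun b => by simp), Finsupp.smul_sum]
  exact Finsupp.sum_congr fun b _ => by rw [smul_smul, smul_eq_mul, mul_left_comm]

def mulALeft (u : CA F ℓ Γ j0) : CA F ℓ Γ j0 →ₗ[F] CA F ℓ Γ j0 where
  toFun := mulA F ℓ Γ j0 u
  map_add' := mulA_add_right u
  map_smul' c := mulA_smul_right c u

lemma mulA_zero_right (u : CA F ℓ Γ j0) : mulA F ℓ Γ j0 u 0 = 0 :=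
  map_zero (mulALeft u)

lemma mulA_sub_right (u v w : CA F ℓ Γ j0) :
    mulA F ℓ Γ j0 u (v - w) = mulA F ℓ Γ j0 u v - mulA F ℓ Γ j0 u w :=
  map_sub (mulALeft u) v w

lemma mulA_X_X {α β : ℕ → F} {i j : ℕ → ℕ} (hα : α ∈ Γ) (hi : i ∈ jIdx ℓ j0)
    (hβ : β ∈ Γ) (hj : j ∈ jIdx ℓ j0) :
    mulA F ℓ Γ j0 (X F ℓ Γ j0 α i) (X F ℓ Γ j0 β j) = X F ℓ Γ j0 (α + β) (i + j) := by
  rw [X_of_mem hα hi, X_of_mem hβ hj]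
  unfold mulA
  rw [Finsupp.sum_single_index (by simp), Finsupp.sum_single_index (by simp), one_mul, one_smul]

lemma mulA_X_mulA_X_neg {e : ℕ → F} (he : e ∈ Γ) (v : CA F ℓ Γ j0) :
    mulA F ℓ Γ j0 (X F ℓ Γ j0 e 0) (mulA F ℓ Γ j0 (X F ℓ Γ j0 (-e) 0) v) = v := by
  induction v using Finsupp.induction_linear with
  | zero => rw [mulA_zero_right, mulA_zero_right]
  | add v w hv hw => rw [mulA_add_right, mulA_add_right, hv, hw]
  | single a c =>
    have h0 := zero_mem_jIdx (ℓ := ℓ) (j0 := j0)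
    rw [single_eq_smul_X, mulA_smul_right, mulA_smul_right, mulA_X_X (Γ.neg_mem he) h0 a.1.2 a.2.2, zero_add,
      mulA_X_X he h0 (Γ.add_mem (Γ.neg_mem he) a.1.2) a.2.2, zero_add, add_neg_cancel_left]

lemma pstar_X (q : ℕ) {α : ℕ → F} {i : ℕ → ℕ} (hα : α ∈ Γ) (hi : i ∈ jIdx ℓ j0) :
    pstar F ℓ Γ j0 q (X F ℓ Γ j0 α i) = α q • X F ℓ Γ j0 α i := by
  rw [X_of_mem hα hi]
  unfold pstar
  rw [Finsupp.sum_single_index (by simp), one_mul]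

lemma pt_X_zero (q : ℕ) {α : ℕ → F} (hα : α ∈ Γ) :
    pt F ℓ Γ j0 q (X F ℓ Γ j0 α 0) = 0 := by
  rw [X_of_mem hα zero_mem_jIdx]
  unfold pt
  simp

lemma dd_X_zero (q : ℕ) {α : ℕ → F} (hα : α ∈ Γ) :
    dd F ℓ Γ j0 q (X F ℓ Γ j0 α 0) = α q • X F ℓ Γ j0 α 0 := by
  rw [dd, pstar_X q hα zero_mem_jIdx, pt_X_zero q hα, add_zero]

lemma Dop_X_zero {α : ℕ → F} (hα : α ∈ Γ) :
    Dop F ℓ Γ j0 (X F ℓ Γ j0 α 0) = (∑ q ∈ jSet ℓ 1 3 ∪ iSet ℓ 4 5, α q) • X F ℓ Γ j0 α 0 := by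
  simp only [Dop, pstar_X _ hα zero_mem_jIdx, pt_X_zero _ hα, mulA_zero_right, Finset.sum_smul,
    Finset.sum_const_zero, add_zero]

lemma brk_X_zero {α : ℕ → F} (hα : α ∈ Γ) (hα0 : α 0 = 0)
    (hdeg : ∑ q ∈ jSet ℓ 1 3 ∪ iSet ℓ 4 5, α q = 2) (u : CA F ℓ Γ j0) :
    brk F ℓ Γ j0 (X F ℓ Γ j0 α 0) u =
      ∑ q ∈ iSet ℓ 1 6, mulA F ℓ Γ j0 (X F ℓ Γ j0 (sgm F ℓ q) 0)
        (α q • mulA F ℓ Γ j0 (X F ℓ Γ j0 α 0) (dd F ℓ Γ j0 (bar ℓ q) u) -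
          α (bar ℓ q) • mulA F ℓ Γ j0 (X F ℓ Γ j0 α 0) (dd F ℓ Γ j0 q u)) := by
  simp only [brk, Dop_X_zero hα, hdeg, sub_self, mulA_zero_left, dd_X_zero _ hα, hα0, zero_smul,
    mulA_smul_left, add_zero, sub_zero]

lemma dmu_eq_pstar_sub (r q : ℕ) (u : CA F ℓ Γ j0) :
    dmu F ℓ Γ j0 (fun a => a.1 r - a.1 q) u = pstar F ℓ Γ j0 r u - pstar F ℓ Γ j0 q u := by
  unfold dmu pstar
  rw [← Finsupp.sum_sub]
  exact Finsupp.sum_congr fun a _ => by rw [mul_sub, sub_smul]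

end

theorem dmu_p_eq_ad_add_pt_sub_pt_general
    {F : Type*} [Field F] (ℓ : ℕ → ℕ) (Γ : AddSubgroup (ℕ → F)) (j0 : Bool)
    (hΓ1 : ∀ p ∈ jSet ℓ 1 3 ∪ iSet ℓ 4 5, (Pi.single p (1 : F) : ℕ → F) ∈ Γ) :
    ∀ p ∈ iSet ℓ 1 3, ∀ u : CA F ℓ Γ j0,
      dmu F ℓ Γ j0 (fun a => a.1 (bar ℓ p) - a.1 p) u =
        brk F ℓ Γ j0 (X F ℓ Γ j0 (-sgm F ℓ p) 0) u +
          pt F ℓ Γ j0 p u - pt F ℓ Γ j0 (bar ℓ p) u := by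
  intro p hp u
  have hσ : -sgm F ℓ p ∈ Γ := neg_sgm_mem hΓ1 hp
  have hp6 := mem_iSet_one_six_of_mem_iSet_one_three hp
  rw [brk_X_zero hσ (neg_sgm_apply_zero hp) (sum_neg_sgm hp), Finset.sum_eq_single_of_mem p hp6,
    neg_sgm_apply_of_mem hp hp6, neg_sgm_apply_bar_of_mem hp hp6, if_pos rfl, one_smul, one_smul,
    ← mulA_sub_right, mulA_X_mulA_X_neg (Γ.neg_mem_iff.mp hσ), dmu_eq_pstar_sub]
  · simp only [dd]
    abel
  · intro q hq hqp
    rw [neg_sgm_apply_of_mem hp hq, neg_sgm_apply_bar_of_mem hp hq, if_neg hqp, zero_smul,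
      zero_smul, sub_zero, mulA_zero_right]

/-- For every `p ∈ I_{1,3}`, the operator identity
`d_{μ_p} = ad x^{−σ_p} + ∂_{t_p} − ∂_{t_{p̄}}` holds on `𝒦`, where
`μ_p(α) = α_{p̄} − α_p` and `d_{μ_p}(x^{α,i⃗}) = μ_p(α) x^{α,i⃗}`. -/
theorem dmu_p_eq_ad_add_pt_sub_pt
    {F : Type*} [Field F] [CharZero F] (ℓ : ℕ → ℕ) (Γ : AddSubgroup (ℕ → F)) (j0 : Bool)
    (hℓ : 0 < iot ℓ 6)
    (hΓ1 : ∀ p ∈ jSet ℓ 1 3 ∪ iSet ℓ 4 5, (Pi.single p (1 : F) : ℕ → F) ∈ Γ)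
    (hΓ2 : ∀ α ∈ Γ, ∀ p ∈ iSet ℓ 6 6 ∪ barSet ℓ (iSet ℓ 4 6), α p = 0)
    (hΓ3 : ∀ α ∈ Γ, ∀ p, 2 * iot ℓ 6 < p → α p = 0)
    (hΓ0 : (∃ α ∈ Γ, α 0 ≠ 0) → (Pi.single 0 (1 : F) : ℕ → F) ∈ Γ)
    (hJ0 : j0 = false → ∃ α ∈ Γ, α 0 ≠ 0) :
    ∀ p ∈ iSet ℓ 1 3, ∀ u : CA F ℓ Γ j0,
      dmu F ℓ Γ j0 (fun a => a.1 (bar ℓ p) - a.1 p) u =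
        brk F ℓ Γ j0 (X F ℓ Γ j0 (-sgm F ℓ p) 0) u +
          pt F ℓ Γ j0 p u - pt F ℓ Γ j0 (bar ℓ p) u :=
  dmu_p_eq_ad_add_pt_sub_pt_general ℓ Γ j0 hΓ1

end
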